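/- There exists a QI-preserving CPTP map that is not a maximally incoherent operation: the map sending every state to the product state |+⟩⟨+|^A ⊗ |0⟩⟨0|^B maps QI states to QI states, but maps the incoherent state |0⟩⟨0|^A ⊗ |0⟩⟨0|^B to a state that is not incoherent on A. Hence QIP ⊄ MIO. -/

import Mathlib

open Matrix Finset
open scoped Kronecker ComplexOrder

/-- A density operator: positive semidefinite with unit trace. -/
def IsDensity {n : Type*} [Fintype n] (ρ : Matrix n n ℂ) : Prop :=
  ρ.PosSemidef ∧ ρ.trace = 1

/-- A quantum-incoherent (QI) state on a bipartite system with quantum part `Q`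
and incoherent part `B` (with its fixed reference basis): a state of the form
`∑ j, p j • ρ j ⊗ |j⟩⟨j|`. -/
def IsQI {Q B : Type*} [Fintype Q] [Fintype B] [DecidableEq B]
    (σ : Matrix (Q × B) (Q × B) ℂ) : Prop :=
  ∃ (p : B → ℝ) (ρ : B → Matrix Q Q ℂ),
    (∀ j, 0 ≤ p j) ∧ (∑ j, p j = 1) ∧ (∀ j, IsDensity (ρ j)) ∧
    σ = ∑ j, (p j : ℂ) • (ρ j ⊗ₖ Matrix.single j j 1)

/-- An incoherent state: a density operator diagonal in the reference basis. -/
def IsIncoherent {n : Type*} [Fintype n] (σ : Matrix n n ℂ) : Prop :=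
  IsDensity σ ∧ ∀ x y, x ≠ y → σ x y = 0

/-- The extension `id_k ⊗ E` of a linear map on matrices. -/
def tensId {n m : Type*} (k : Type*)
    (E : Matrix n n ℂ →ₗ[ℂ] Matrix m m ℂ) :
    Matrix (k × n) (k × n) ℂ →ₗ[ℂ] Matrix (k × m) (k × m) ℂ where
  toFun X := Matrix.of fun p q => E (Matrix.of fun a b => X (p.1, a) (q.1, b)) p.2 q.2
  map_add' X Y := by
    ext p q
    show E (Matrix.of fun a b => (X + Y) (p.1, a) (q.1, b)) p.2 q.2 = _
    rw [show (Matrix.of fun a b => (X + Y) (p.1, a) (q.1, b)) =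
        (Matrix.of fun a b => X (p.1, a) (q.1, b)) +
        (Matrix.of fun a b => Y (p.1, a) (q.1, b)) from rfl, map_add]
    rfl
  map_smul' c X := by
    ext p q
    show E (Matrix.of fun a b => (c • X) (p.1, a) (q.1, b)) p.2 q.2 = _
    rw [show (Matrix.of fun a b => (c • X) (p.1, a) (q.1, b)) =
        c • (Matrix.of fun a b => X (p.1, a) (q.1, b)) from rfl, _root_.map_smul]
    rfl

/-- Complete positivity: `id_k ⊗ E` preserves positive semidefiniteness for all `k`. -/
def IsCompletelyPositive {n m : Type*} [Fintype n] [Fintype m]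
    (E : Matrix n n ℂ →ₗ[ℂ] Matrix m m ℂ) : Prop :=
  ∀ (k : ℕ) (X : Matrix (Fin k × n) (Fin k × n) ℂ), X.PosSemidef →
    ((tensId (Fin k) E) X).PosSemidef

/-- A completely positive trace-preserving (CPTP) linear map. -/
def IsCPTP {n m : Type*} [Fintype n] [Fintype m]
    (E : Matrix n n ℂ →ₗ[ℂ] Matrix m m ℂ) : Prop :=
  IsCompletelyPositive E ∧ ∀ X, (E X).trace = X.trace

/-- The basis density operators `ρ_{a,b}` built from the reference basis. -/
noncomputable def rhoBasis (D : ℕ) (a b : Fin D) : Matrix (Fin D) (Fin D) ℂ :=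
  if a = b then Matrix.single a a 1
  else if (a : ℕ) < b then
    (1 / 2 : ℂ) • (Matrix.single a a 1 + Matrix.single a b 1 +
      Matrix.single b a 1 + Matrix.single b b 1)
  else
    (1 / 2 : ℂ) • (Matrix.single a a 1 + (-Complex.I) • Matrix.single a b 1 +
      Complex.I • Matrix.single b a 1 + Matrix.single b b 1)

/-- `|+⟩⟨+|` on a qubit. -/
noncomputable def plusMat : Matrix (Fin 2) (Fin 2) ℂ := Matrix.of fun _ _ => (1 / 2 : ℂ)

/-- `|0⟩⟨0|` on a qubit. -/
def e00 : Matrix (Fin 2) (Fin 2) ℂ := Matrix.single 0 0 1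

/-- The maximally entangled state `|Φ⁺⟩⟨Φ⁺|` on two qubits, `|Φ⁺⟩ = (|00⟩+|11⟩)/√2`. -/
noncomputable def phiMat : Matrix (Fin 2 × Fin 2) (Fin 2 × Fin 2) ℂ :=
  Matrix.of fun p q => if p.1 = p.2 ∧ q.1 = q.2 then (1 / 2 : ℂ) else 0

/-- The map sending every state to `|+⟩⟨+|^A ⊗ |0⟩⟨0|^B` (as a linear map,
`X ↦ (Tr X) • |+⟩⟨+| ⊗ |0⟩⟨0|`). -/
noncomputable def constMap :
    Matrix (Fin 2 × Fin 2) (Fin 2 × Fin 2) ℂ →ₗ[ℂ]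
    Matrix (Fin 2 × Fin 2) (Fin 2 × Fin 2) ℂ where
  toFun X := X.trace • (plusMat ⊗ₖ e00)
  map_add' X Y := by simp [Matrix.trace_add, add_smul]
  map_smul' c X := by simp [Matrix.trace_smul, smul_smul]

/-!
A replacement map `X ↦ (Tr X) • τ` with `τ` a state is CPTP: its extension `id_k ⊗ E` sends `X`
to `Tr_B X ⊗ τ`, a product of positive semidefinite matrices. It maps every state, in particular
every QI state, to `τ`, and `τ = |+⟩⟨+| ⊗ |0⟩⟨0|` is QI since it is a product with a basis state
on `B`. But `τ` has the off-diagonal entry `1/2` at `(0,0),(1,0)`, so the incoherent state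
`|00⟩⟨00|` is sent out of the incoherent states.
-/

section ReplacementMap

variable {k n m : Type*} [Fintype n]

noncomputable def partialTraceRight (X : Matrix (k × n) (k × n) ℂ) : Matrix k k ℂ :=
  Matrix.of fun a b => ∑ j, X (a, j) (b, j)

theorem partialTraceRight_eq_sum_submatrix (X : Matrix (k × n) (k × n) ℂ) :
    partialTraceRight X = ∑ j, X.submatrix (fun a => (a, j)) (fun b => (b, j)) := by
  ext a b
  simp [partialTraceRight, Matrix.sum_apply]

theorem Matrix.PosSemidef.partialTraceRight {X : Matrix (k × n) (k × n) ℂ} (hX : X.PosSemidef) :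
    (partialTraceRight X).PosSemidef := by
  rw [partialTraceRight_eq_sum_submatrix]
  exact posSemidef_sum _ fun j _ => hX.submatrix _

noncomputable def replacementMap (τ : Matrix m m ℂ) : Matrix n n ℂ →ₗ[ℂ] Matrix m m ℂ :=
  (traceLinearMap n ℂ ℂ).smulRight τ

theorem replacementMap_apply (τ : Matrix m m ℂ) (X : Matrix n n ℂ) :
    replacementMap τ X = X.trace • τ :=
  rfl

theorem tensId_replacementMap (τ : Matrix m m ℂ) (X : Matrix (k × n) (k × n) ℂ) :
    tensId k (replacementMap τ) X = partialTraceRight X ⊗ₖ τ := by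
  ext ⟨a, p⟩ ⟨b, q⟩
  simp [tensId, replacementMap_apply, partialTraceRight, Matrix.trace]

theorem isCPTP_replacementMap [Fintype m] {τ : Matrix m m ℂ} (hτ : IsDensity τ) :
    IsCPTP (replacementMap (n := n) τ) := by
  refine ⟨fun k X hX => ?_, fun X => ?_⟩
  · rw [tensId_replacementMap]
    exact hX.partialTraceRight.kronecker hτ.1
  · rw [replacementMap_apply, trace_smul, hτ.2, smul_eq_mul, mul_one]

theorem replacementMap_apply_of_trace_eq_one (τ : Matrix m m ℂ) {X : Matrix n n ℂ}
    (hX : X.trace = 1) : replacementMap τ X = τ := by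
  rw [replacementMap_apply, hX, one_smul]

end ReplacementMap

theorem IsDensity.kronecker {l n : Type*} [Fintype l] [Fintype n] {A : Matrix l l ℂ}
    {B : Matrix n n ℂ} (hA : IsDensity A) (hB : IsDensity B) : IsDensity (A ⊗ₖ B) :=
  ⟨hA.1.kronecker hB.1, by rw [trace_kronecker, hA.2, hB.2, mul_one]⟩

theorem isDensity_single {n : Type*} [Fintype n] [DecidableEq n] (j : n) :
    IsDensity (Matrix.single j j (1 : ℂ)) := by
  refine ⟨?_, trace_single_eq_same _ _⟩
  rw [← diagonal_single]
  exact PosSemidef.diagonal (Pi.single_nonneg.mpr zero_le_one)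

theorem isIncoherent_single {n : Type*} [Fintype n] [DecidableEq n] (j : n) :
    IsIncoherent (Matrix.single j j (1 : ℂ)) :=
  ⟨isDensity_single j, fun _ _ hxy =>
    single_apply_of_ne _ _ _ _ _ fun h => hxy (h.1.symm.trans h.2)⟩

theorem IsQI.trace_eq_one {Q B : Type*} [Fintype Q] [Fintype B] [DecidableEq B]
    {σ : Matrix (Q × B) (Q × B) ℂ} (hσ : IsQI σ) : σ.trace = 1 := by
  obtain ⟨p, ρ, -, hp, hρ, rfl⟩ := hσ
  simp only [trace_sum, trace_smul, trace_kronecker, (hρ _).2, trace_single_eq_same, mul_one,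
    smul_eq_mul]
  exact_mod_cast hp

theorem isQI_kronecker_single {Q B : Type*} [Fintype Q] [Fintype B] [DecidableEq B]
    {ρ : Matrix Q Q ℂ} (hρ : IsDensity ρ) (j : B) : IsQI (ρ ⊗ₖ Matrix.single j j 1) := by
  have hp : (0 : B → ℝ) ≤ Pi.single j 1 := Pi.single_nonneg.mpr zero_le_one
  refine ⟨Pi.single j 1, fun _ => ρ, hp, by simp, fun _ => hρ, ?_⟩
  rw [Finset.sum_eq_single j (fun i _ hi => by simp [hi]) (by simp)]
  simp

theorem isDensity_plusMat : IsDensity plusMat := by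
  have h : plusMat = vecMulVec (fun _ => ((√2)⁻¹ : ℂ)) (star fun _ => ((√2)⁻¹ : ℂ)) := by
    ext i j
    simp only [plusMat, of_apply, vecMulVec_apply, Pi.star_apply, ← Complex.ofReal_inv,
      Complex.star_def, Complex.conj_ofReal, ← Complex.ofReal_mul, ← mul_inv,
      Real.mul_self_sqrt zero_le_two]
    norm_num
  refine ⟨h ▸ posSemidef_vecMulVec_self_star _, ?_⟩
  simp [plusMat, Matrix.trace]

theorem constMap_eq_replacementMap : constMap = replacementMap (plusMat ⊗ₖ e00) :=
  rfl

/-- `constMap` is a QI-preserving CPTP map that is not MIO: it maps QI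
states to QI states, but maps the incoherent state `|0⟩⟨0| ⊗ |0⟩⟨0|` to a state that is
not incoherent. Hence QIP ⊄ MIO. -/
theorem qip_not_subset_mio :
    IsCPTP constMap ∧ (∀ σ, IsQI σ → IsQI (constMap σ)) ∧
      IsIncoherent (e00 ⊗ₖ e00) ∧ ¬ IsIncoherent (constMap (e00 ⊗ₖ e00)) ∧
      ¬ (∀ σ, IsIncoherent σ → IsIncoherent (constMap σ)) := by
  have hτ : IsDensity (plusMat ⊗ₖ e00) := isDensity_plusMat.kronecker (isDensity_single 0)
  have hinc : IsIncoherent (e00 ⊗ₖ e00) := by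
    rw [e00, single_kronecker_single, one_mul]
    exact isIncoherent_single _
  have hnot : ¬ IsIncoherent (constMap (e00 ⊗ₖ e00)) := by
    rw [constMap_eq_replacementMap, replacementMap_apply_of_trace_eq_one _ hinc.1.2]
    intro h
    have hentry := h.2 (0, 0) (1, 0) (by decide)
    simp [plusMat, e00] at hentry
  refine ⟨isCPTP_replacementMap hτ, fun σ hσ => ?_, hinc, hnot, fun hmio => hnot (hmio _ hinc)⟩
  rw [constMap_eq_replacementMap, replacementMap_apply_of_trace_eq_one _ hσ.trace_eq_one]
  exact isQI_kronecker_single isDensity_plusMat 0
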